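/- With the convention Z(2) = 1 and Z(p) = 81(2p−4)!/(128(p−2)!p!) · (16/9)^p for p ≥ 3, the generating function satisfies Σ_{p ≥ 2} Z(p) x^p = ((9−64x)^{3/2} + 288x − 27) / 512 for |x| < 9/64. -/

import Mathlib

open Nat Filter Real

/-- The partition function `Z(p)` of simple Boltzmann triangulations of the `p`-gon,
with the convention `Z(2) = 1`. -/
noncomputable def Zfun (p : ℕ) : ℝ :=
  if p = 2 then 1 else 81 * ((2*p-4)! : ℝ) / (128 * (p-2)! * p !) * (16/9)^p

/-!
With `y = -64x/9` we have `9 - 64x = 9(1 + y)`, and `Z(p) x^p` is `27/512` times the `p`-th term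
`C(3/2, p) y^p` of the binomial series of `(1 + y)^{3/2}`, which converges for `|y| < 1`.
The two omitted terms `p = 0, 1` of that series contribute `27/512 · (1 + 3y/2) = (27 - 288x)/512`.
-/

theorem Ring.succ_nsmul_choose_succ {R : Type*} [NonAssocRing R] [Pow R ℕ] [NatPowAssoc R]
    [BinomialRing R] (r : R) (n : ℕ) :
    (n + 1) • Ring.choose r (n + 1) = Ring.choose r n * (r - n) := by
  simpa [Nat.choose_succ_self_right] using Ring.choose_smul_choose r (Nat.le_succ n)

theorem Ring.choose_succ_eq_div {K : Type*} [Field K] [CharZero K] (a : K) (n : ℕ) :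
    Ring.choose a (n + 1) = Ring.choose a n * (a - n) / (n + 1) := by
  rw [eq_div_iff (by norm_cast), mul_comm, ← Ring.succ_nsmul_choose_succ, nsmul_eq_mul]
  push_cast
  ring

theorem Real.hasSum_choose_mul_pow (a : ℝ) {y : ℝ} (hy : |y| < 1) :
    HasSum (fun k ↦ Ring.choose a k * y ^ k) ((1 + y) ^ a) := by
  have hmem : y ∈ Metric.eball (0 : ℝ) 1 := by
    simpa [Metric.mem_eball, edist_dist, Real.dist_eq] using hy
  simpa [binomialSeries, FormalMultilinearSeries.ofScalars_apply_eq, mul_comm] using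
    Real.one_add_rpow_hasFPowerSeriesOnBall_zero.hasSum hmem

theorem choose_three_halves_mul_neg_four_pow (n : ℕ) :
    Ring.choose (3 / 2 : ℝ) (n + 2) * (-4) ^ (n + 2) = 12 * (2 * n)! / (n ! * (n + 2)!) := by
  induction n with
  | zero => norm_num [Ring.choose_succ_eq_div, Ring.choose_zero_right]
  | succ n ih =>
    have hstep : Ring.choose (3 / 2 : ℝ) (n + 3) * (-4) ^ (n + 3)
        = Ring.choose (3 / 2 : ℝ) (n + 2) * (-4) ^ (n + 2) * (2 * (2 * n + 1) / (n + 3)) := by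
      rw [Ring.choose_succ_eq_div, pow_succ]
      push_cast
      field_simp
      ring
    rw [hstep, ih, show 2 * (n + 1) = 2 * n + 1 + 1 by ring, Nat.factorial_succ (2 * n + 1),
      Nat.factorial_succ (2 * n), Nat.factorial_succ n, Nat.factorial_succ (n + 2)]
    push_cast
    field_simp
    ring

theorem Zfun_add_two (n : ℕ) :
    Zfun (n + 2) = 81 * (2 * n)! / (128 * n ! * (n + 2)!) * (16 / 9) ^ (n + 2) := by
  rw [Zfun]
  split_ifs with h
  · obtain rfl : n = 0 := by omega
    norm_num
  · rw [show 2 * (n + 2) - 4 = 2 * n by omega, Nat.add_sub_cancel]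

theorem Zfun_add_two_eq_choose (n : ℕ) :
    Zfun (n + 2) = 27 / 512 * Ring.choose (3 / 2 : ℝ) (n + 2) * (-64 / 9) ^ (n + 2) := by
  rw [show (-64 / 9 : ℝ) = -4 * (16 / 9) by norm_num, mul_pow, ← mul_assoc, mul_assoc (27 / 512),
    choose_three_halves_mul_neg_four_pow, Zfun_add_two]
  field_simp
  ring

theorem Real.nine_rpow_three_halves : (9 : ℝ) ^ ((3 : ℝ) / 2) = 27 := by
  rw [show (9 : ℝ) = 3 ^ (2 : ℝ) by norm_num, ← Real.rpow_mul (by norm_num)]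
  norm_num

/-- The generating function `Σ_{p ≥ 2} Z(p) x^p = ((9-64x)^{3/2} + 288x - 27)/512`
for `|x| < 9/64`. -/
theorem Z_generating_function (x : ℝ) (hx : |x| < 9/64) :
    HasSum (fun p : ℕ => Zfun (p+2) * x^(p+2))
      (((9 - 64*x) ^ ((3:ℝ)/2) + 288*x - 27) / 512) := by
  set y : ℝ := -64 / 9 * x with hy_def
  have hy : |y| < 1 := by
    rw [abs_mul, abs_of_neg (by norm_num : (-64 / 9 : ℝ) < 0)]
    linarith
  have hbinom := (hasSum_nat_add_iff' 2).mpr (Real.hasSum_choose_mul_pow (3 / 2) hy)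
  have hterms : (fun p : ℕ => Zfun (p + 2) * x ^ (p + 2))
      = fun n => 27 / 512 * (Ring.choose (3 / 2 : ℝ) (n + 2) * y ^ (n + 2)) := by
    funext n
    rw [Zfun_add_two_eq_choose, hy_def, mul_pow]
    ring
  have hvalue : ((9 - 64 * x) ^ ((3 : ℝ) / 2) + 288 * x - 27) / 512
      = 27 / 512 * ((1 + y) ^ ((3 : ℝ) / 2)
          - ∑ i ∈ Finset.range 2, Ring.choose (3 / 2 : ℝ) i * y ^ i) := by
    rw [show 9 - 64 * x = 9 * (1 + y) by rw [hy_def]; ring,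
      Real.mul_rpow (by norm_num) (by linarith [neg_abs_le y]), Real.nine_rpow_three_halves]
    simp only [Finset.sum_range_succ, Finset.range_one, Finset.sum_singleton,
      Ring.choose_zero_right, Ring.choose_one_right, pow_zero, pow_one, mul_one, hy_def]
    ring
  rw [hterms, hvalue]
  exact hbinom.mul_left _
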